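/- There is an absolute constant c > 0 such that for every integer n ≥ 2 and every integer k with 2 ≤ k ≤ n, the number of incidences between the points of the cube lattice P = {1, 2, …, n}³ ⊂ ℝ³ and the k-rich lines with respect to P is at least c·n⁶/k³ (that is, at least c·N²/k³ where N = n³ = |P|). -/
import Mathlib

/-- A straight line in `ℝ^d`, given as the set of points on an affine line. -/
def IsLine {d : ℕ} (l : Set (Fin d → ℝ)) : Prop :=
  ∃ p v : Fin d → ℝ, v ≠ 0 ∧ l = {x | ∃ t : ℝ, x = p + t • v}

/-- The cube lattice `{1, 2, …, n}^d ⊂ ℝ^d`. -/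
def cubeLattice (d n : ℕ) : Set (Fin d → ℝ) :=
  {x | ∀ i, ∃ m : ℕ, 1 ≤ m ∧ m ≤ n ∧ x i = m}

noncomputable section AuxCube

open Finset

def lineThru (p v : Fin 3 → ℝ) : Set (Fin 3 → ℝ) := {x | ∃ t : ℝ, x = p + t • v}

lemma mem_lineThru_self (p v : Fin 3 → ℝ) : p ∈ lineThru p v := ⟨0, by simp⟩

lemma cubeLattice_finite (d n : ℕ) : (cubeLattice d n).Finite := by
  have h1 : (Set.univ.pi (fun _ : Fin d => (Set.Iic n : Set ℕ))).Finite :=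
    Set.Finite.pi (fun _ => Set.finite_Iic n)
  refine ((h1.image (fun m : Fin d → ℕ => fun i => (m i : ℝ)))).subset ?_
  rintro x hx
  choose m h1m h2m h3m using hx
  exact ⟨m, fun i _ => h2m i, by funext i; exact (h3m i).symm⟩

lemma line_eq_of_two_points {l : Set (Fin 3 → ℝ)} (hl : IsLine l) {x y : Fin 3 → ℝ}
    (hx : x ∈ l) (hy : y ∈ l) (hxy : x ≠ y) : l = lineThru x (y - x) := by
  obtain ⟨p, v, hv, rfl⟩ := hl
  obtain ⟨a, rfl⟩ := hx
  obtain ⟨b, rfl⟩ := hy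
  have hab : b - a ≠ 0 := by
    intro h
    apply hxy
    have : a = b := by linarith [sub_eq_zero.mp h]
    rw [this]
  have hyx : (p + b • v) - (p + a • v) = (b - a) • v := by
    rw [sub_smul]; abel
  ext z
  constructor
  · rintro ⟨t, rfl⟩
    exact ⟨(t - a) / (b - a), by rw [hyx, smul_smul, div_mul_cancel₀ _ hab, sub_smul]; abel⟩
  · rintro ⟨t, rfl⟩
    exact ⟨a + t * (b - a), by rw [hyx, smul_smul]; rw [add_smul, mul_smul]; abel⟩

def Inc (n k : ℕ) : Set ((Fin 3 → ℝ) × Set (Fin 3 → ℝ)) :=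
  {pl | pl.1 ∈ cubeLattice 3 n ∧ IsLine pl.2 ∧
      k ≤ Set.ncard (cubeLattice 3 n ∩ pl.2) ∧ pl.1 ∈ pl.2}

lemma inc_finite (n k : ℕ) (hk : 2 ≤ k) : (Inc n k).Finite := by
  have hP := cubeLattice_finite 3 n
  refine (Set.Finite.image
      (fun q : (Fin 3 → ℝ) × (Fin 3 → ℝ) × (Fin 3 → ℝ) =>
        (q.1, lineThru q.2.1 (q.2.2 - q.2.1))) (hP.prod (hP.prod hP))).subset ?_
  rintro ⟨p, l⟩ ⟨hp, hline, hcard, hpl⟩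
  have hfin : (cubeLattice 3 n ∩ l).Finite := hP.subset (Set.inter_subset_left)
  have h2 : 1 < Set.ncard (cubeLattice 3 n ∩ l) := lt_of_lt_of_le (by omega) hcard
  obtain ⟨x, y, hx, hy, hxy⟩ := (Set.one_lt_ncard_iff hfin).mp h2
  exact ⟨(p, x, y), ⟨hp, hx.1, hy.1⟩,
    Prod.ext rfl (line_eq_of_two_points hline hx.2 hy.2 hxy).symm⟩

/-- generic lower bound from a finset of (point, direction) pairs -/
lemma inc_lower (n k : ℕ) (hk : 2 ≤ k) (F : Finset ((Fin 3 → ℝ) × (Fin 3 → ℝ)))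
    (hmem : ∀ q ∈ F, q.1 ∈ cubeLattice 3 n ∧ q.2 ≠ 0 ∧
      k ≤ Set.ncard (cubeLattice 3 n ∩ lineThru q.1 q.2))
    (hinj : ∀ q ∈ F, ∀ r ∈ F, q.1 = r.1 → lineThru q.1 q.2 = lineThru r.1 r.2 → q = r) :
    F.card ≤ Set.ncard (Inc n k) := by
  classical
  set g : (Fin 3 → ℝ) × (Fin 3 → ℝ) → (Fin 3 → ℝ) × Set (Fin 3 → ℝ) :=
    fun q => (q.1, lineThru q.1 q.2) with hg
  have hsub : g '' ↑F ⊆ Inc n k := by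
    rintro _ ⟨q, hq, rfl⟩
    obtain ⟨h1, h2, h3⟩ := hmem q hq
    exact ⟨h1, ⟨q.1, q.2, h2, rfl⟩, h3, mem_lineThru_self q.1 q.2⟩
  have hinj' : Set.InjOn g ↑F := by
    intro q hq r hr he
    simp only [hg, Prod.mk.injEq] at he
    exact hinj q hq r hr he.1 (he.1 ▸ he.2)
  calc F.card = (g '' ↑F).ncard := by rw [Set.ncard_image_of_injOn hinj', Set.ncard_coe_finset]
    _ ≤ Set.ncard (Inc n k) := Set.ncard_le_ncard hsub (inc_finite n k hk)

def nvec (q : (ℕ × ℕ) × ℕ) : Fin 3 → ℝ := ![q.1.1, q.1.2, q.2]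

lemma nvec_inj : Function.Injective nvec := by
  rintro ⟨⟨a, b⟩, c⟩ ⟨⟨a', b'⟩, c'⟩ h
  have h0 := congrFun h 0
  have h1 := congrFun h 1
  have h2 := congrFun h 2
  simp only [nvec, Matrix.cons_val_zero, Matrix.cons_val_one, Matrix.head_cons,
    Matrix.cons_val_two, Matrix.tail_cons, Nat.cast_inj] at h0 h1 h2
  simp [h0, h1, h2]

lemma nvec_mem_cubeLattice {n : ℕ} {q : (ℕ × ℕ) × ℕ}
    (h1 : 1 ≤ q.1.1 ∧ q.1.1 ≤ n) (h2 : 1 ≤ q.1.2 ∧ q.1.2 ≤ n) (h3 : 1 ≤ q.2 ∧ q.2 ≤ n) :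
    nvec q ∈ cubeLattice 3 n := by
  intro i
  fin_cases i
  · exact ⟨q.1.1, h1.1, h1.2, rfl⟩
  · exact ⟨q.1.2, h2.1, h2.2, rfl⟩
  · exact ⟨q.2, h3.1, h3.2, rfl⟩

lemma nvec_ne_zero {q : (ℕ × ℕ) × ℕ} (h : 1 ≤ q.1.1) : nvec q ≠ 0 := by
  intro h0
  have := congrFun h0 0
  simp [nvec] at this
  omega

lemma rich_of (n k : ℕ) (p v : Fin 3 → ℝ) (T : Finset ℤ) (hT : k ≤ T.card) (hv : v ≠ 0)
    (h : ∀ t ∈ T, p + (t : ℝ) • v ∈ cubeLattice 3 n) :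
    k ≤ Set.ncard (cubeLattice 3 n ∩ lineThru p v) := by
  classical
  set f : ℤ → (Fin 3 → ℝ) := fun t => p + (t : ℝ) • v with hf
  have hinj : Set.InjOn f ↑T := by
    intro a _ b _ hab
    have : ((a : ℝ) - b) • v = 0 := by
      rw [sub_smul]
      have := add_left_cancel hab
      rw [this]; abel
    rcases smul_eq_zero.mp this with h' | h'
    · exact_mod_cast sub_eq_zero.mp h'
    · exact absurd h' hv
  have hsub : f '' ↑T ⊆ cubeLattice 3 n ∩ lineThru p v := by
    rintro _ ⟨t, ht, rfl⟩
    exact ⟨h t ht, t, rfl⟩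
  calc k ≤ T.card := hT
    _ = (f '' ↑T).ncard := by rw [Set.ncard_image_of_injOn hinj, Set.ncard_coe_finset]
    _ ≤ _ := Set.ncard_le_ncard hsub
        ((cubeLattice_finite 3 n).subset Set.inter_subset_left)

lemma sum_inv_sq_le (M : ℕ) : ∑ d ∈ Icc 2 M, (1 : ℝ) / (d : ℝ) ^ 2 ≤ 3 / 4 := by
  rcases lt_or_ge M 2 with hM | hM
  · have : Icc 2 M = ∅ := by
      rw [Finset.Icc_eq_empty_iff]; omega
    simp [this]
    norm_num
  · have key : ∀ m : ℕ, 2 ≤ m → ∑ d ∈ Icc 2 m, (1 : ℝ) / (d : ℝ) ^ 2 ≤ 3 / 4 - 1 / m := by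
      intro m hm
      induction m, hm using Nat.le_induction with
      | base => norm_num
      | succ m hm ih =>
        rw [← Finset.insert_Icc_right_eq_Icc_add_one (by omega : 2 ≤ m + 1), Finset.sum_insert (by simp)]
        have h1 : (0:ℝ) < m := by positivity
        have h2 : (0:ℝ) < (m:ℝ) + 1 := by positivity
        have : (1 : ℝ) / ((m:ℕ)+1 : ℕ) ^ 2 ≤ 1 / m - 1 / ((m:ℝ)+1) := by
          rw [div_sub_div _ _ (ne_of_gt h1) (ne_of_gt h2)]
          rw [div_le_div_iff₀ (by push_cast; positivity) (by positivity)]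
          push_cast; ring_nf; nlinarith
        push_cast at this ⊢
        linarith [ih]
    linarith [key M hM, one_div_pos.mpr (show (0:ℝ) < M by positivity)]

lemma coprime_count (M : ℕ) (hM : 1 ≤ M) :
    (M : ℝ) ^ 2 / 4 ≤
      (((Icc 1 M ×ˢ Icc 1 M).filter (fun q : ℕ × ℕ => Nat.Coprime q.1 q.2)).card : ℝ) := by
  classical
  set B := Icc 1 M ×ˢ Icc 1 M with hB
  have hcardB : B.card = M ^ 2 := by
    rw [hB, Finset.card_product, Nat.card_Icc, Nat.add_sub_cancel]
    ring
  have hsub : B.filter (fun q : ℕ × ℕ => ¬ Nat.Coprime q.1 q.2) ⊆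
      (Icc 2 M).biUnion (fun d =>
        ((Icc 1 M).filter (d ∣ ·)) ×ˢ ((Icc 1 M).filter (d ∣ ·))) := by
    rintro ⟨a, b⟩ hq
    simp only [Finset.mem_filter, hB, Finset.mem_product, Finset.mem_Icc] at hq
    obtain ⟨⟨⟨ha1, ha2⟩, hb1, hb2⟩, hnc⟩ := hq
    have hg1 : 1 ≤ Nat.gcd a b := Nat.one_le_iff_ne_zero.mpr (Nat.gcd_ne_zero_left (by omega))
    have hg2 : 2 ≤ Nat.gcd a b := by
      rcases Nat.lt_or_ge (Nat.gcd a b) 2 with h | h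
      · exact absurd (by omega : Nat.gcd a b = 1) hnc
      · exact h
    have hgle : Nat.gcd a b ≤ M := le_trans (Nat.gcd_le_left b (by omega)) ha2
    simp only [Finset.mem_biUnion, Finset.mem_Icc, Finset.mem_product, Finset.mem_filter]
    exact ⟨Nat.gcd a b, ⟨hg2, hgle⟩, ⟨⟨by omega, ha2⟩, Nat.gcd_dvd_left a b⟩,
      ⟨⟨by omega, hb2⟩, Nat.gcd_dvd_right a b⟩⟩
  have hdiv : ∀ d : ℕ, ((Icc 1 M).filter (d ∣ ·)).card = M / d := by
    intro d
    have : Icc 1 M = Ioc 0 M := rfl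
    rw [this, Nat.Ioc_filter_dvd_card_eq_div]
  have hcount : ((B.filter (fun q : ℕ × ℕ => ¬ Nat.Coprime q.1 q.2)).card : ℝ) ≤
      3 / 4 * (M : ℝ) ^ 2 := by
    calc ((B.filter (fun q : ℕ × ℕ => ¬ Nat.Coprime q.1 q.2)).card : ℝ)
        ≤ (((Icc 2 M).biUnion (fun d =>
            ((Icc 1 M).filter (d ∣ ·)) ×ˢ ((Icc 1 M).filter (d ∣ ·)))).card : ℝ) := by
          exact_mod_cast Finset.card_le_card hsub
      _ ≤ ∑ d ∈ Icc 2 M, ((((Icc 1 M).filter (d ∣ ·)) ×ˢ ((Icc 1 M).filter (d ∣ ·))).card : ℝ) := by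
          exact_mod_cast Finset.card_biUnion_le
      _ = ∑ d ∈ Icc 2 M, ((M / d : ℕ) : ℝ) ^ 2 := by
          refine Finset.sum_congr rfl fun d _ => ?_
          rw [Finset.card_product, hdiv d]; push_cast; ring
      _ ≤ ∑ d ∈ Icc 2 M, (M : ℝ) ^ 2 * (1 / (d : ℝ) ^ 2) := by
          refine Finset.sum_le_sum fun d hd => ?_
          have hd2 : 2 ≤ d := (Finset.mem_Icc.mp hd).1
          have hdpos : (0:ℝ) < d := by positivity
          have h1 : ((M / d : ℕ) : ℝ) ≤ (M : ℝ) / d := Nat.cast_div_le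
          have h0 : (0:ℝ) ≤ ((M / d : ℕ) : ℝ) := by positivity
          calc ((M / d : ℕ) : ℝ) ^ 2 ≤ ((M:ℝ)/(d:ℝ)) ^ 2 := by nlinarith
            _ = (M : ℝ) ^ 2 * (1 / (d : ℝ) ^ 2) := by field_simp
      _ = (M : ℝ) ^ 2 * ∑ d ∈ Icc 2 M, (1 / (d : ℝ) ^ 2) := by rw [Finset.mul_sum]
      _ ≤ (M : ℝ) ^ 2 * (3 / 4) := by
          have := sum_inv_sq_le M
          nlinarith [sq_nonneg (M:ℝ)]
      _ = 3 / 4 * (M : ℝ) ^ 2 := by ring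
  have hsplit : (B.filter (fun q : ℕ × ℕ => Nat.Coprime q.1 q.2)).card
      + (B.filter (fun q : ℕ × ℕ => ¬ Nat.Coprime q.1 q.2)).card = M ^ 2 := by
    rw [Finset.card_filter_add_card_filter_not, hcardB]
  have h2 : ((B.filter (fun q : ℕ × ℕ => Nat.Coprime q.1 q.2)).card : ℝ)
      + ((B.filter (fun q : ℕ × ℕ => ¬ Nat.Coprime q.1 q.2)).card : ℝ) = (M:ℝ)^2 := by
    exact_mod_cast hsplit
  linarith


lemma caseA (n k : ℕ) (hn : 2 ≤ n) (hk : 2 ≤ k) (hkn : k ≤ n) :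
    ((n : ℝ)) ^ 3 ≤ (Set.ncard (Inc n k) : ℝ) := by
  classical
  set e3 : Fin 3 → ℝ := ![0, 0, 1] with he3
  have he3ne : e3 ≠ 0 := by
    intro h
    have := congrFun h 2
    simp [he3] at this
  set W : Finset ((ℕ × ℕ) × ℕ) := (Icc 1 n ×ˢ Icc 1 n) ×ˢ Icc 1 n with hW
  set F : Finset ((Fin 3 → ℝ) × (Fin 3 → ℝ)) := W.image (fun q => (nvec q, e3)) with hF
  have hcardF : F.card = n ^ 3 := by
    rw [hF, Finset.card_image_of_injective _ (fun a b h => nvec_inj (congrArg Prod.fst h)),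
      hW, Finset.card_product, Finset.card_product, Nat.card_Icc, Nat.add_sub_cancel]
    ring
  have hbound := inc_lower n k hk F ?_ ?_
  · calc ((n:ℝ))^3 = (F.card : ℝ) := by rw [hcardF]; push_cast; ring
      _ ≤ _ := by exact_mod_cast hbound
  · -- membership conditions
    intro q hq
    rw [hF, Finset.mem_image] at hq
    obtain ⟨w, hw, rfl⟩ := hq
    rw [hW] at hw
    simp only [Finset.mem_product, Finset.mem_Icc] at hw
    obtain ⟨⟨hw1, hw2⟩, hw3⟩ := hw
    refine ⟨nvec_mem_cubeLattice hw1 hw2 hw3, he3ne, ?_⟩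
    refine rich_of n k (nvec w) e3 (Finset.Icc (1 - (w.2 : ℤ)) ((n : ℤ) - w.2)) ?_ he3ne ?_
    · rw [Int.card_Icc]
      omega
    · intro t ht
      rw [Finset.mem_Icc] at ht
      intro i
      fin_cases i
      · refine ⟨w.1.1, hw1.1, hw1.2, ?_⟩
        show nvec w 0 + t * e3 0 = _
        simp [nvec, he3]
      · refine ⟨w.1.2, hw2.1, hw2.2, ?_⟩
        show nvec w 1 + t * e3 1 = _
        simp [nvec, he3]
      · refine ⟨((w.2 : ℤ) + t).toNat, by omega, by omega, ?_⟩
        show nvec w 2 + t * e3 2 = _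
        have h0 : (0:ℤ) ≤ (w.2 : ℤ) + t := by omega
        have : ((((w.2 : ℤ) + t).toNat : ℕ) : ℝ) = (w.2 : ℝ) + t := by
          rw [← Int.cast_natCast, Int.toNat_of_nonneg h0]
          push_cast; ring
        rw [this]
        simp [nvec, he3]
  · -- injectivity
    intro q hq r hr h1 _
    rw [hF, Finset.mem_image] at hq hr
    obtain ⟨w, _, rfl⟩ := hq
    obtain ⟨w', _, rfl⟩ := hr
    have : w = w' := nvec_inj h1
    rw [this]

lemma nvec_apply0 (q : (ℕ × ℕ) × ℕ) : nvec q 0 = q.1.1 := rfl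
lemma nvec_apply1 (q : (ℕ × ℕ) × ℕ) : nvec q 1 = q.1.2 := rfl
lemma nvec_apply2 (q : (ℕ × ℕ) × ℕ) : nvec q 2 = q.2 := rfl

lemma caseB (n k : ℕ) (hk : 2 ≤ k) (h8 : 8 * k ≤ n) :
    (n : ℝ) ^ 6 / (131072 * (k : ℝ) ^ 3) ≤ (Set.ncard (Inc n k) : ℝ) := by
  classical
  set L : ℕ := n / (8 * k) with hL
  set s : ℕ := n - k * L with hs
  have hL1 : 1 ≤ L := (Nat.one_le_div_iff (by omega)).mpr h8
  have hkL : k * L ≤ n / 8 := by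
    have h1 : L = n / 8 / k := by rw [hL, Nat.div_div_eq_div_mul]
    rw [h1, mul_comm]
    exact Nat.div_mul_le_self (n / 8) k
  have h8n : n / 8 ≤ n := Nat.div_le_self n 8
  have hsum : s + k * L = n := by omega
  have hs1 : 1 ≤ s := by
    have : n / 8 < n := by omega
    omega
  -- Finsets
  set cop : Finset (ℕ × ℕ) :=
    (Icc 1 L ×ˢ Icc 1 L).filter (fun q : ℕ × ℕ => Nat.Coprime q.1 q.2) with hcop
  set D : Finset ((ℕ × ℕ) × ℕ) := cop ×ˢ Icc 1 L with hD
  set PT : Finset ((ℕ × ℕ) × ℕ) := (Icc 1 s ×ˢ Icc 1 s) ×ˢ Icc 1 s with hPT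
  set F : Finset ((Fin 3 → ℝ) × (Fin 3 → ℝ)) :=
    (PT ×ˢ D).image (fun q => (nvec q.1, nvec q.2)) with hF
  -- membership facts extraction
  have hDmem : ∀ v ∈ D, (1 ≤ v.1.1 ∧ v.1.1 ≤ L) ∧ (1 ≤ v.1.2 ∧ v.1.2 ≤ L) ∧
      (1 ≤ v.2 ∧ v.2 ≤ L) ∧ Nat.Coprime v.1.1 v.1.2 := by
    intro v hv
    rw [hD, Finset.mem_product] at hv
    obtain ⟨hv1, hv2⟩ := hv
    rw [hcop, Finset.mem_filter, Finset.mem_product, Finset.mem_Icc, Finset.mem_Icc] at hv1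
    rw [Finset.mem_Icc] at hv2
    exact ⟨hv1.1.1, hv1.1.2, hv2, hv1.2⟩
  have hPTmem : ∀ p ∈ PT, (1 ≤ p.1.1 ∧ p.1.1 ≤ s) ∧ (1 ≤ p.1.2 ∧ p.1.2 ≤ s) ∧
      (1 ≤ p.2 ∧ p.2 ≤ s) := by
    intro p hp
    simp only [hPT, Finset.mem_product, Finset.mem_Icc] at hp
    exact ⟨hp.1.1, hp.1.2, hp.2⟩
  -- the coordinates bound for points on constructed lines
  have hcoord : ∀ (pc vc : ℕ) (t : ℤ), 1 ≤ pc → pc ≤ s → 1 ≤ vc → vc ≤ L →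
      0 ≤ t → t ≤ (k : ℤ) - 1 →
      ∃ m : ℕ, 1 ≤ m ∧ m ≤ n ∧ (pc : ℝ) + (t : ℝ) * (vc : ℝ) = m := by
    intro pc vc t hpc1 hpc2 hvc1 hvc2 ht0 htk
    refine ⟨pc + t.toNat * vc, by omega, ?_, ?_⟩
    · have h1 : t.toNat ≤ k - 1 := by omega
      have h2 : t.toNat * vc ≤ (k - 1) * L := Nat.mul_le_mul h1 hvc2
      have h3 : (k - 1) * L ≤ k * L := Nat.mul_le_mul_right L (by omega)
      omega
    · have hcast : ((t.toNat : ℕ) : ℝ) = ((t : ℤ) : ℝ) := by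
        rw [← Int.cast_natCast, Int.toNat_of_nonneg ht0]
      push_cast
      rw [hcast]
  -- injectivity of the parametrization
  have hparaminj : Set.InjOn (fun q : ((ℕ × ℕ) × ℕ) × ((ℕ × ℕ) × ℕ) =>
      (nvec q.1, nvec q.2)) ↑(PT ×ˢ D) := by
    intro q _ r _ h
    have h1 : nvec q.1 = nvec r.1 := congrArg Prod.fst h
    have h2 : nvec q.2 = nvec r.2 := congrArg Prod.snd h
    exact Prod.ext (nvec_inj h1) (nvec_inj h2)
  have hcardF : (F.card : ℝ) = (s : ℝ) ^ 3 * ((cop.card : ℝ) * L) := by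
    rw [hF, Finset.card_image_of_injOn hparaminj]
    simp only [hPT, hD, Finset.card_product, Nat.card_Icc, Nat.add_sub_cancel]
    push_cast; ring
  -- apply the generic bound
  have hbound := inc_lower n k hk F ?_ ?_
  · -- final arithmetic
    have hkpos : (0:ℝ) < k := by positivity
    have hnpos : (0:ℝ) < n := by
      have : 0 < n := by omega
      positivity
    have hsreal : (n : ℝ) / 2 ≤ (s : ℝ) := by
      have h1 : ((k * L : ℕ) : ℝ) ≤ ((n / 8 : ℕ) : ℝ) := by exact_mod_cast hkL
      have h2 : ((n / 8 : ℕ) : ℝ) ≤ (n : ℝ) / 8 := Nat.cast_div_le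
      have h3 : (s : ℝ) = (n : ℝ) - ((k * L : ℕ) : ℝ) := by
        rw [hs, Nat.cast_sub (by omega)]
      rw [h3]; push_cast at h1 h2 ⊢; linarith
    have hLreal : (n : ℝ) / (16 * k) ≤ (L : ℝ) := by
      rcases lt_or_ge n (16 * k) with hc | hc
      · have h1 : (n : ℝ) / (16 * k) < 1 := by
          rw [div_lt_one (by positivity)]
          exact_mod_cast hc
        have h2 : (1 : ℝ) ≤ L := by exact_mod_cast hL1
        linarith
      · have hm := Nat.div_add_mod n (8 * k)
        have hmlt : n % (8 * k) < 8 * k := Nat.mod_lt n (by omega)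
        have h1 : ((8 * k * L : ℕ) : ℝ) + ((n % (8 * k) : ℕ) : ℝ) = (n : ℝ) := by
          exact_mod_cast hm
        have h2 : ((n % (8 * k) : ℕ) : ℝ) < 8 * (k : ℝ) := by exact_mod_cast hmlt
        have h3 : (16 : ℝ) * k ≤ n := by exact_mod_cast hc
        rw [div_le_iff₀ (by positivity)]
        push_cast at h1
        nlinarith
    have hcop' : (L : ℝ) ^ 2 / 4 ≤ (cop.card : ℝ) := coprime_count L hL1
    have hLpos : (0:ℝ) < L := by positivity
    have hspos : (0:ℝ) ≤ (s:ℝ) := by positivity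
    have hkey : (n : ℝ) ^ 6 / (131072 * (k : ℝ) ^ 3) ≤ (F.card : ℝ) := by
      rw [hcardF]
      have e1 : ((n:ℝ)/2) ^ 3 ≤ (s:ℝ)^3 := by
        apply pow_le_pow_left₀ (by positivity) hsreal
      have e2 : ((n:ℝ)/(16*k)) ^ 3 / 4 ≤ (cop.card : ℝ) * L := by
        have : ((n:ℝ)/(16*k))^2 ≤ (L:ℝ)^2 := by
          apply pow_le_pow_left₀ (by positivity) hLreal
        calc ((n:ℝ)/(16*k)) ^ 3 / 4 = ((n:ℝ)/(16*k))^2/4 * ((n:ℝ)/(16*k)) := by ring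
          _ ≤ (L:ℝ)^2/4 * L := by
              apply mul_le_mul (by linarith) hLreal (by positivity) (by positivity)
          _ ≤ (cop.card : ℝ) * L := by
              apply mul_le_mul_of_nonneg_right hcop' (le_of_lt hLpos)
      calc (n : ℝ) ^ 6 / (131072 * (k : ℝ) ^ 3)
          = ((n:ℝ)/2)^3 * (((n:ℝ)/(16*k))^3 / 4) := by field_simp; ring
        _ ≤ (s:ℝ)^3 * ((cop.card : ℝ) * L) := by
            apply mul_le_mul e1 e2 (by positivity) (by positivity)
    calc (n : ℝ) ^ 6 / (131072 * (k : ℝ) ^ 3) ≤ (F.card : ℝ) := hkey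
      _ ≤ _ := by exact_mod_cast hbound
  · -- membership conditions
    intro q hq
    rw [hF, Finset.mem_image] at hq
    obtain ⟨⟨p, v⟩, hpv, rfl⟩ := hq
    rw [Finset.mem_product] at hpv
    obtain ⟨hp, hv⟩ := hpv
    obtain ⟨hp1, hp2, hp3⟩ := hPTmem p hp
    obtain ⟨hv1, hv2, hv3, _⟩ := hDmem v hv
    have hsn : s ≤ n := by omega
    refine ⟨nvec_mem_cubeLattice ⟨hp1.1, le_trans hp1.2 hsn⟩ ⟨hp2.1, le_trans hp2.2 hsn⟩
      ⟨hp3.1, le_trans hp3.2 hsn⟩, nvec_ne_zero hv1.1, ?_⟩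
    refine rich_of n k (nvec p) (nvec v) (Finset.Icc 0 ((k : ℤ) - 1)) ?_
      (nvec_ne_zero hv1.1) ?_
    · rw [Int.card_Icc]; omega
    · intro t ht
      rw [Finset.mem_Icc] at ht
      intro i
      fin_cases i
      · obtain ⟨m, hm1, hm2, hm3⟩ := hcoord p.1.1 v.1.1 t hp1.1 hp1.2 hv1.1 hv1.2 ht.1 ht.2
        refine ⟨m, hm1, hm2, ?_⟩
        simpa [nvec] using hm3
      · obtain ⟨m, hm1, hm2, hm3⟩ := hcoord p.1.2 v.1.2 t hp2.1 hp2.2 hv2.1 hv2.2 ht.1 ht.2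
        refine ⟨m, hm1, hm2, ?_⟩
        simpa [nvec] using hm3
      · obtain ⟨m, hm1, hm2, hm3⟩ := hcoord p.2 v.2 t hp3.1 hp3.2 hv3.1 hv3.2 ht.1 ht.2
        refine ⟨m, hm1, hm2, ?_⟩
        simpa [nvec] using hm3
  · -- injectivity of lines
    intro q hq r hr h1 h2
    rw [hF, Finset.mem_image] at hq hr
    obtain ⟨⟨p, v⟩, hpv, rfl⟩ := hq
    obtain ⟨⟨p', v'⟩, hpv', rfl⟩ := hr
    simp only at h1 h2 ⊢
    rw [Finset.mem_product] at hpv hpv'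
    obtain ⟨_, hv⟩ := hpv
    obtain ⟨_, hv'⟩ := hpv'
    obtain ⟨hv1, hv2, hv3, hvcop⟩ := hDmem v hv
    obtain ⟨hv1', hv2', hv3', hvcop'⟩ := hDmem v' hv'
    have hpp : p = p' := nvec_inj h1
    subst hpp
    -- lines equal gives parallel directions
    have hmem : nvec p + (1 : ℝ) • nvec v' ∈ lineThru (nvec p) (nvec v') := ⟨1, rfl⟩
    rw [← h1] at h2
    rw [← h2] at hmem
    obtain ⟨t, ht⟩ := hmem
    have hvv : nvec v' = t • nvec v := by
      have h' := ht
      rw [one_smul] at h'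
      exact add_left_cancel h'
    have ha : (v'.1.1 : ℝ) = t * v.1.1 := by
      have := congrFun hvv 0
      rw [nvec_apply0] at this
      simpa [nvec_apply0] using this
    have hb : (v'.1.2 : ℝ) = t * v.1.2 := by
      have := congrFun hvv 1
      simpa [nvec_apply1] using this
    have hc : (v'.2 : ℝ) = t * v.2 := by
      have := congrFun hvv 2
      simpa [nvec_apply2] using this
    have habr : (v'.1.1 : ℝ) * v.1.2 = (v.1.1 : ℝ) * v'.1.2 := by
      rw [ha, hb]; ring
    have habn : v'.1.1 * v.1.2 = v.1.1 * v'.1.2 := by exact_mod_cast habr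
    have hd1 : v.1.1 ∣ v'.1.1 :=
      Nat.Coprime.dvd_of_dvd_mul_right hvcop ⟨v'.1.2, habn⟩
    have hd2 : v'.1.1 ∣ v.1.1 :=
      Nat.Coprime.dvd_of_dvd_mul_right hvcop' ⟨v.1.2, habn.symm⟩
    have haa : v.1.1 = v'.1.1 := Nat.dvd_antisymm hd1 hd2
    have hane : (v.1.1 : ℝ) ≠ 0 := by
      have : 0 < v.1.1 := hv1.1
      positivity
    have ht1 : t = 1 := by
      have : t * (v.1.1 : ℝ) = 1 * (v.1.1 : ℝ) := by
        rw [one_mul, ← ha, haa]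
      exact mul_right_cancel₀ hane this
    subst ht1
    have hbb : v.1.2 = v'.1.2 := by
      have : (v'.1.2 : ℝ) = (v.1.2 : ℝ) := by rw [hb, one_mul]
      exact_mod_cast this.symm
    have hcc : v.2 = v'.2 := by
      have : (v'.2 : ℝ) = (v.2 : ℝ) := by rw [hc, one_mul]
      exact_mod_cast this.symm
    have : v = v' := by
      rcases v with ⟨⟨a, b⟩, c⟩
      rcases v' with ⟨⟨a', b'⟩, c'⟩
      simp_all
    rw [this]

/-- There is an absolute constant `c > 0` such that for every `n ≥ 2` and `2 ≤ k ≤ n`,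
the number of incidences between the points of the cube lattice `{1, …, n}³ ⊂ ℝ³` and
the `k`-rich lines with respect to it is at least `c * n⁶ / k³`. -/
theorem cube_lattice_rich_incidences_lower_bound :
    ∃ c : ℝ, 0 < c ∧
      ∀ n k : ℕ, 2 ≤ n → 2 ≤ k → k ≤ n →
        c * (n : ℝ) ^ 6 / (k : ℝ) ^ 3 ≤
          ((Set.ncard {pl : (Fin 3 → ℝ) × Set (Fin 3 → ℝ) |
              pl.1 ∈ cubeLattice 3 n ∧ IsLine pl.2 ∧
              k ≤ Set.ncard (cubeLattice 3 n ∩ pl.2) ∧ pl.1 ∈ pl.2}) : ℝ) := by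
  refine ⟨1 / 131072, by norm_num, ?_⟩
  intro n k hn hk hkn
  show _ ≤ (Set.ncard (Inc n k) : ℝ)
  have hkpos : (0:ℝ) < k := by positivity
  have hnpos : (0:ℝ) < n := by
    have : 0 < n := by omega
    positivity
  rcases le_or_gt (8 * k) n with h8 | h8
  · have := caseB n k hk h8
    calc (1 / 131072 : ℝ) * (n : ℝ) ^ 6 / (k : ℝ) ^ 3
        = (n : ℝ) ^ 6 / (131072 * (k : ℝ) ^ 3) := by field_simp
      _ ≤ _ := this
  · have := caseA n k hn hk hkn
    have hnk : (n : ℝ) ≤ 8 * k := by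
      have : n ≤ 8 * k := by omega
      exact_mod_cast this
    have h3 : (n : ℝ) ^ 3 ≤ 512 * (k : ℝ) ^ 3 := by
      have := pow_le_pow_left₀ (le_of_lt hnpos) hnk 3
      calc (n : ℝ) ^ 3 ≤ (8 * (k:ℝ)) ^ 3 := this
        _ = 512 * (k : ℝ) ^ 3 := by ring
    calc (1 / 131072 : ℝ) * (n : ℝ) ^ 6 / (k : ℝ) ^ 3 ≤ (n : ℝ) ^ 3 := by
          rw [div_le_iff₀ (by positivity)]
          nlinarith [pow_pos hnpos 3, pow_pos hkpos 3]
      _ ≤ _ := this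

end AuxCube
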